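/- Let Γ be a connected signed graph of order n ≥ 4 whose underlying graph is not a star. If Γ contains a pendant vertex (a vertex of degree 1), then η(Γ) ≤ n − 4, i.e. rank(A(Γ)) ≥ 4. -/

import Mathlib

/- The adjacency matrix of a signed graph `(G, σ)`: the `(u,v)` entry is `σ u v`
if `uv` is an edge of `G`, and `0` otherwise. -/
open Classical in
noncomputable def signedAdj {V : Type*} (G : SimpleGraph V) (σ : V → V → ℝ) :
    Matrix V V ℝ :=
  Matrix.of fun u v => if G.Adj u v then σ u v else 0

/-- The sign of a walk: the product of the signs of its edges. -/
def walkSign {V : Type*} {G : SimpleGraph V} (σ : V → V → ℝ) {u v : V}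
    (p : G.Walk u v) : ℝ :=
  (p.darts.map fun d => σ d.toProd.1 d.toProd.2).prod

/-- A signed graph is balanced if every cycle is positive. -/
def IsBalanced {V : Type*} (G : SimpleGraph V) (σ : V → V → ℝ) : Prop :=
  ∀ (u : V) (c : G.Walk u u), c.IsCycle → walkSign σ c = 1

/-!
The pendant edge `xy` and, since `Γ` is connected but not a star centred at `y`, an edge `ab`
avoiding `y` index a `4 × 4` principal submatrix of `A(Γ)`. As `x` sees only `y`, expanding its
determinant along row `x` and then column `x` leaves `σ(xy) σ(yx) σ(ab) σ(ba) ≠ 0`, whatever the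
edges between `y` and `a`, `b` are.
-/

theorem Matrix.det_fin_four_of_pendant_pattern {R : Type*} [CommRing R]
    (B : Matrix (Fin 4) (Fin 4) R) (h00 : B 0 0 = 0) (h02 : B 0 2 = 0) (h03 : B 0 3 = 0)
    (h20 : B 2 0 = 0) (h22 : B 2 2 = 0) (h30 : B 3 0 = 0) (h33 : B 3 3 = 0) :
    B.det = B 0 1 * B 1 0 * B 2 3 * B 3 2 := by
  simp [Matrix.det_succ_row_zero, Fin.sum_univ_succ, Fin.succAbove,
    h00, h02, h03, h20, h22, h30, h33, mul_assoc]

theorem SimpleGraph.Preconnected.exists_adj_ne_ne {V : Type*} {G : SimpleGraph V}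
    (hG : G.Preconnected) {c : V} (hstar : ¬ ∀ a b, G.Adj a b ↔ (a = c ∨ b = c) ∧ a ≠ b) :
    ∃ a b, G.Adj a b ∧ a ≠ c ∧ b ≠ c := by
  by_contra! hE
  refine hstar fun a b => ⟨fun hab => ⟨?_, hab.ne⟩, ?_⟩
  · by_contra! h
    exact h.2 (hE a b hab h.1)
  have hc : ∀ v, v ≠ c → G.Adj v c := by
    intro v hv
    obtain ⟨p⟩ := hG v c
    cases p with
    | nil => exact absurd rfl hv
    | @cons _ w _ hvw _ =>
      obtain rfl : w = c := by_contra fun hw => hw (hE v w hvw hv)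
      exact hvw
  rintro ⟨rfl | rfl, hab⟩
  · exact (hc b hab.symm).symm
  · exact hc a hab

theorem signedAdj_apply_of_adj {V : Type*} {G : SimpleGraph V} (σ : V → V → ℝ) {u v : V}
    (h : G.Adj u v) : signedAdj G σ u v = σ u v := by
  simp [signedAdj, h]

theorem signedAdj_apply_of_not_adj {V : Type*} {G : SimpleGraph V} (σ : V → V → ℝ) {u v : V}
    (h : ¬ G.Adj u v) : signedAdj G σ u v = 0 := by
  simp [signedAdj, h]

theorem four_le_rank_signedAdj {V : Type*} [Fintype V] {G : SimpleGraph V} {σ : V → V → ℝ}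
    (hσ : ∀ u v, G.Adj u v → σ u v ≠ 0) {x y a b : V} (hxy : G.Adj x y) (hab : G.Adj a b)
    (hxa : ¬ G.Adj x a) (hxb : ¬ G.Adj x b) : 4 ≤ (signedAdj G σ).rank := by
  set B := (signedAdj G σ).submatrix ![x, y, a, b] ![x, y, a, b]
  have hne : ∀ {u v}, G.Adj u v → signedAdj G σ u v ≠ 0 := fun h => by
    rw [signedAdj_apply_of_adj σ h]
    exact hσ _ _ h
  have hzero : ∀ {u v}, ¬ G.Adj u v → signedAdj G σ u v = 0 := signedAdj_apply_of_not_adj σ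
  have hdet : B.det ≠ 0 := by
    rw [B.det_fin_four_of_pendant_pattern (hzero G.irrefl) (hzero hxa) (hzero hxb)
      (hzero (mt G.adj_symm hxa)) (hzero G.irrefl) (hzero (mt G.adj_symm hxb)) (hzero G.irrefl)]
    exact mul_ne_zero (mul_ne_zero (mul_ne_zero (hne hxy) (hne hxy.symm)) (hne hab)) (hne hab.symm)
  calc 4 = B.rank := by rw [Matrix.rank_of_det_ne_zero hdet, Fintype.card_fin]
    _ ≤ (signedAdj G σ).rank := Matrix.rank_submatrix_le _ _ _

theorem rank_ge_four_of_pendant_not_star_general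
    {V : Type*} [Fintype V] (G : SimpleGraph V) (σ : V → V → ℝ)
    (hsgn : ∀ u v, G.Adj u v → σ u v = 1 ∨ σ u v = -1)
    (hconn : G.Connected)
    (hnotstar : ¬ ∃ c : V, ∀ a b : V, G.Adj a b ↔ (a = c ∨ b = c) ∧ a ≠ b)
    (hpend : ∃ x y : V, G.neighborSet x = {y}) :
    4 ≤ (signedAdj G σ).rank := by
  obtain ⟨x, y, hx⟩ := hpend
  have hxadj : ∀ z, G.Adj x z ↔ z = y := fun z => by
    rw [← SimpleGraph.mem_neighborSet, hx, Set.mem_singleton_iff]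
  obtain ⟨a, b, hab, hay, hby⟩ := hconn.preconnected.exists_adj_ne_ne fun h => hnotstar ⟨y, h⟩
  have hσ : ∀ u v, G.Adj u v → σ u v ≠ 0 := fun u v h => by
    rcases hsgn u v h with h | h <;> norm_num [h]
  exact four_le_rank_signedAdj hσ ((hxadj y).2 rfl) hab (mt (hxadj a).1 hay) (mt (hxadj b).1 hby)

/-- A connected signed graph of order `n ≥ 4` which is not a star and contains a
pendant vertex has nullity at most `n - 4`, i.e. `rank A(Γ) ≥ 4`. -/
theorem rank_ge_four_of_pendant_not_star
    {V : Type*} [Fintype V] (G : SimpleGraph V) (σ : V → V → ℝ)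
    (hsym : ∀ u v, σ u v = σ v u)
    (hsgn : ∀ u v, G.Adj u v → σ u v = 1 ∨ σ u v = -1)
    (hn : 4 ≤ Fintype.card V) (hconn : G.Connected)
    (hnotstar : ¬ ∃ c : V, ∀ a b : V, G.Adj a b ↔ (a = c ∨ b = c) ∧ a ≠ b)
    (hpend : ∃ x y : V, G.neighborSet x = {y}) :
    4 ≤ (signedAdj G σ).rank :=
  rank_ge_four_of_pendant_not_star_general G σ hsgn hconn hnotstar hpend
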